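/- arXiv:1402.4603 — 5 statements merged into one kernel-verified Lean document; each statement's English description precedes it below -/
import Mathlib

section
/- For every v ≥ 4 and every s, a (K₂, K_{1,3})-URD(v; 0, s) does not exist; that is, the complete graph K_v admits no decomposition into parallel classes each consisting only of copies of K_{1,3}. -/
open Finset

/-- The vertex set of a 3-star `K_{1,3}` given by its center and its leaf set. -/
def starVerts {V : Type} [DecidableEq V] (b : V × Finset V) : Finset V :=
  insert b.1 b.2

/-- The edge set of a 3-star `K_{1,3}` given by its center and its leaf set. -/
def starEdges {V : Type} [DecidableEq V] (b : V × Finset V) : Finset (Sym2 V) :=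
  b.2.image (fun l => s(b.1, l))

/-- The edge set of a complete block (e.g. a copy of `K₄`) on the vertex set `b`. -/
def blockEdges {V : Type} [DecidableEq V] (b : Finset V) : Finset (Sym2 V) :=
  ((b ×ˢ b).filter (fun p => p.1 ≠ p.2)).image (fun p => s(p.1, p.2))

/-- `M` is a parallel class of copies of `K₂` (a perfect matching) on the point set `P`:
all edges come from `E`, lie inside `P`, and every point of `P` is on exactly one edge. -/
def IsMatchingClass {V : Type} [DecidableEq V] (E : Finset (Sym2 V)) (P : Finset V)
    (M : Finset (Sym2 V)) : Prop :=
  (∀ e ∈ M, e ∈ E) ∧ (∀ e ∈ M, ∀ x ∈ e, x ∈ P) ∧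
  (∀ x ∈ P, ∃! e, e ∈ M ∧ x ∈ e)

/-- `C` is a parallel class of copies of `K_{1,3}` on the point set `P`: every block is a
3-star with edges from `E` and vertices in `P`, and every point of `P` is in exactly one
block (so the blocks are pairwise vertex-disjoint and their vertex sets partition `P`). -/
def IsStarClass {V : Type} [DecidableEq V] (E : Finset (Sym2 V)) (P : Finset V)
    (C : Finset (V × Finset V)) : Prop :=
  (∀ b ∈ C, b.2.card = 3 ∧ b.1 ∉ b.2 ∧ starEdges b ⊆ E ∧ starVerts b ⊆ P) ∧
  (∀ x ∈ P, ∃! b, b ∈ C ∧ x ∈ starVerts b)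

/-- `C` is a parallel class of copies of `K₄` on the point set `P`. -/
def IsK4Class {V : Type} [DecidableEq V] (E : Finset (Sym2 V)) (P : Finset V)
    (C : Finset (Finset V)) : Prop :=
  (∀ b ∈ C, b.card = 4 ∧ blockEdges b ⊆ E ∧ b ⊆ P) ∧
  (∀ x ∈ P, ∃! b, b ∈ C ∧ x ∈ b)

/-- A uniformly resolvable `(K₂, K_{1,3})`-decomposition of the edge set `E` into
`r₁` matching classes and `s₁` star classes on the point set `P` (partial classes), and
`r₂` matching classes and `s₂` star classes on the full vertex set (full classes), such
that every edge of `E` lies in exactly one block of exactly one class. -/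
def HasHoleyDecomp {V : Type} [Fintype V] [DecidableEq V] (E : Finset (Sym2 V))
    (P : Finset V) (r₁ s₁ r₂ s₂ : ℕ) : Prop :=
  ∃ (M₁ : Fin r₁ → Finset (Sym2 V)) (S₁ : Fin s₁ → Finset (V × Finset V))
    (M₂ : Fin r₂ → Finset (Sym2 V)) (S₂ : Fin s₂ → Finset (V × Finset V)),
    (∀ i, IsMatchingClass E P (M₁ i)) ∧ (∀ j, IsStarClass E P (S₁ j)) ∧
    (∀ i, IsMatchingClass E Finset.univ (M₂ i)) ∧
    (∀ j, IsStarClass E Finset.univ (S₂ j)) ∧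
    (∀ e ∈ E,
      ((∑ i, if e ∈ M₁ i then 1 else 0) + (∑ i, if e ∈ M₂ i then 1 else 0)
        + (∑ j, ((S₁ j).filter (fun b => e ∈ starEdges b)).card)
        + (∑ j, ((S₂ j).filter (fun b => e ∈ starEdges b)).card)) = 1)

/-- A uniformly resolvable `(K₂, K_{1,3})`-decomposition of the edge set `E` into `r`
parallel classes of copies of `K₂` and `s` parallel classes of copies of `K_{1,3}`,
each class partitioning the whole vertex set. -/
def HasUniformDecomp {V : Type} [Fintype V] [DecidableEq V] (E : Finset (Sym2 V))
    (r s : ℕ) : Prop :=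
  HasHoleyDecomp E Finset.univ 0 0 r s

/-- The edge set of the complete graph on the vertex type `V`. -/
def completeEdges (V : Type) [Fintype V] [DecidableEq V] : Finset (Sym2 V) :=
  (Finset.univ.filter (fun p : V × V => p.1 ≠ p.2)).image (fun p => s(p.1, p.2))

/-- The edge set of the complete multipartite graph with `u` groups of size `g`
(all edges between distinct groups, none within a group). -/
def multipartiteEdges (u g : ℕ) : Finset (Sym2 (Fin u × Fin g)) :=
  (Finset.univ.filter
      (fun p : (Fin u × Fin g) × (Fin u × Fin g) => p.1.1 ≠ p.2.1)).image
    (fun p => s(p.1, p.2))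

/-- The edge set of `K_{v+h}` minus the edges of a `K_h` on a hole of size `h`
(the hole consists of the `Sum.inr` vertices). -/
def holeyEdges (v h : ℕ) : Finset (Sym2 (Fin v ⊕ Fin h)) :=
  (Finset.univ.filter (fun p : (Fin v ⊕ Fin h) × (Fin v ⊕ Fin h) =>
      p.1 ≠ p.2 ∧ ¬(p.1.isRight ∧ p.2.isRight))).image (fun p => s(p.1, p.2))

/-- A `(K₂, K_{1,3})`-URD(v; r, s): a decomposition of the edge set of `K_v` into `r`
parallel classes of copies of `K₂` and `s` parallel classes of copies of `K_{1,3}`. -/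
def IsURD (v r s : ℕ) : Prop :=
  HasUniformDecomp (completeEdges (Fin v)) r s

/-- A `(K₂, K_{1,3})`-URGDD(r, s) of type `g^u`: a uniformly resolvable decomposition of
the complete multipartite graph with `u` groups of size `g` into `r` parallel classes of
copies of `K₂` and `s` parallel classes of copies of `K_{1,3}`. -/
def IsURGDD (g u r s : ℕ) : Prop :=
  HasUniformDecomp (multipartiteEdges u g) r s

/-- A `(K₂, K_{1,3})`-IURD(v + h, h; [r₁, s₁], [r₂, s₂]): a decomposition of `K_{v+h}`
minus a hole of size `h` into `r₁` matching classes and `s₁` star classes covering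
exactly the `v` points outside the hole (partial classes), and `r₂` matching classes and
`s₂` star classes covering all `v + h` points (full classes). -/
def IsIURD (v h r₁ s₁ r₂ s₂ : ℕ) : Prop :=
  HasHoleyDecomp (holeyEdges v h)
    (Finset.univ.filter (fun x : Fin v ⊕ Fin h => x.isLeft)) r₁ s₁ r₂ s₂

/-- A `4`-RGDD of type `g^u` with `h` parallel classes: a resolvable decomposition of the
complete multipartite graph with `u` groups of size `g` into copies of `K₄`, partitioned
into `h` parallel classes each of which partitions the whole vertex set. -/
def Is4RGDD (g u h : ℕ) : Prop :=
  ∃ C : Fin h → Finset (Finset (Fin u × Fin g)),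
    (∀ i, IsK4Class (multipartiteEdges u g) Finset.univ (C i)) ∧
    (∀ e ∈ multipartiteEdges u g,
      (∑ i, ((C i).filter (fun b => e ∈ blockEdges b)).card) = 1)

/-- A `4`-frame of type `g^u`: a decomposition of the complete multipartite graph with
`u` groups of size `g` into copies of `K₄`, partitioned into partial parallel classes,
`g / 3` of them missing each group, each partitioning the points outside that group. -/
def Is4Frame (g u : ℕ) : Prop :=
  ∃ C : Fin u → Fin (g / 3) → Finset (Finset (Fin u × Fin g)),
    (∀ i j, IsK4Class (multipartiteEdges u g)
        (Finset.univ.filter (fun x : Fin u × Fin g => x.1 ≠ i)) (C i j)) ∧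
    (∀ e ∈ multipartiteEdges u g,
      (∑ i, ∑ j, ((C i j).filter (fun b => e ∈ blockEdges b)).card) = 1)

/-- `sumsOf k X` is the set `k ∗ X` of all pairs obtained by adding `k` elements of `X`
together (repetitions allowed). -/
def sumsOf (k : ℕ) (X : Set (ℕ × ℕ)) : Set (ℕ × ℕ) :=
  {p | ∃ f : Fin k → ℕ × ℕ, (∀ i, f i ∈ X) ∧
    p = (∑ i, (f i).1, ∑ i, (f i).2)}

/-! Every vertex `x` of `K_v` lies in exactly one star of each class, where it has degree `3`
(centre) or `1` (leaf); so `v - 1 = deg x` is a sum of `s` odd numbers and `v - 1 ≡ s (mod 2)`.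
Each class has `v / 4` stars of `3` edges, so counting edges gives `v (v - 1) / 2 = 3 s v / 4`,
i.e. `2 (v - 1) = 3 s`, and `s` is even. As `4 ∣ v` once there is a class, `v - 1` is odd:
a contradiction. -/

section Star

variable {V : Type} [DecidableEq V] {b : V × Finset V} {x : V}

lemma mem_starEdges {e : Sym2 V} : e ∈ starEdges b ↔ ∃ l ∈ b.2, s(b.1, l) = e := by
  simp [starEdges]

lemma card_starEdges (h3 : #b.2 = 3) : #(starEdges b) = 3 := by
  rw [starEdges, card_image_of_injective _ fun _ _ h => Sym2.congr_right.mp h, h3]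

lemma card_starVerts (h3 : #b.2 = 3) (hc : b.1 ∉ b.2) : #(starVerts b) = 4 := by
  rw [starVerts, card_insert_of_notMem hc, h3]

lemma card_starEdges_filter_center (h3 : #b.2 = 3) :
    #((starEdges b).filter (b.1 ∈ ·)) = 3 := by
  rw [filter_true_of_mem, card_starEdges h3]
  intro e he
  obtain ⟨l, -, rfl⟩ := mem_starEdges.mp he
  exact Sym2.mem_mk_left _ _

lemma card_starEdges_filter_leaf (hc : b.1 ∉ b.2) (hx : x ∈ b.2) :
    #((starEdges b).filter (x ∈ ·)) = 1 := by
  rw [card_eq_one]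
  refine ⟨s(b.1, x), ext fun e => ?_⟩
  simp only [mem_filter, mem_singleton, mem_starEdges]
  constructor
  · rintro ⟨⟨l, hl, rfl⟩, hxe⟩
    rcases Sym2.mem_iff.mp hxe with rfl | rfl
    · exact absurd hx hc
    · rfl
  · rintro rfl
    exact ⟨⟨x, hx, rfl⟩, Sym2.mem_mk_right _ _⟩

lemma card_starEdges_filter_of_notMem (hx : x ∉ starVerts b) :
    #((starEdges b).filter (x ∈ ·)) = 0 := by
  rw [card_eq_zero, filter_eq_empty_iff]
  intro e he hxe
  obtain ⟨l, hl, rfl⟩ := mem_starEdges.mp he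
  rcases Sym2.mem_iff.mp hxe with rfl | rfl
  · exact hx (mem_insert_self _ _)
  · exact hx (mem_insert_of_mem hl)

lemma odd_card_starEdges_filter (h3 : #b.2 = 3) (hc : b.1 ∉ b.2) (hx : x ∈ starVerts b) :
    Odd #((starEdges b).filter (x ∈ ·)) := by
  rcases mem_insert.mp hx with rfl | hx
  · rw [card_starEdges_filter_center h3]; decide
  · rw [card_starEdges_filter_leaf hc hx]; decide

variable [Fintype V] {E : Finset (Sym2 V)} {C : Finset (V × Finset V)}

lemma IsStarClass.four_mul_card (hC : IsStarClass E univ C) : 4 * #C = Fintype.card V := by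
  have hcover : (univ : Finset V) = C.biUnion starVerts := by
    ext x
    obtain ⟨b, hb, -⟩ := hC.2 x (mem_univ x)
    simp only [mem_biUnion, mem_univ, true_iff]
    exact ⟨b, hb⟩
  have hdisj : (C : Set (V × Finset V)).PairwiseDisjoint starVerts := by
    intro b hb b' hb' hne
    refine disjoint_left.mpr fun x hx hx' => hne ?_
    obtain ⟨_, -, huniq⟩ := hC.2 x (mem_univ x)
    exact (huniq b ⟨hb, hx⟩).trans (huniq b' ⟨hb', hx'⟩).symm
  rw [← card_univ, hcover, card_biUnion hdisj, mul_comm, ← smul_eq_mul, ← sum_const]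
  refine (sum_congr rfl fun b hb => ?_).symm
  obtain ⟨h3, hc, -⟩ := hC.1 b hb
  exact card_starVerts h3 hc

lemma IsStarClass.odd_sum_card_starEdges_filter (hC : IsStarClass E univ C) (x : V) :
    Odd (∑ b ∈ C, #((starEdges b).filter (x ∈ ·))) := by
  obtain ⟨b₀, ⟨hb₀, hx⟩, huniq⟩ := hC.2 x (mem_univ x)
  rw [sum_eq_single_of_mem b₀ hb₀ fun b hb hne =>
    card_starEdges_filter_of_notMem fun hx => hne (huniq b ⟨hb, hx⟩)]
  obtain ⟨h3, hc, -⟩ := hC.1 b₀ hb₀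
  exact odd_card_starEdges_filter h3 hc hx

end Star

section StarResolution

variable {V ι : Type} [DecidableEq V] [Fintype ι] {E : Finset (Sym2 V)}
  {S : ι → Finset (V × Finset V)}

lemma card_eq_sum_card_filter_starEdges
    (hcov : ∀ e ∈ E, ∑ j, #((S j).filter (e ∈ starEdges ·)) = 1)
    {F : Finset (Sym2 V)} (hF : F ⊆ E) :
    #F = ∑ j, ∑ b ∈ S j, #(F.filter (· ∈ starEdges b)) := by
  calc #F = ∑ e ∈ F, ∑ j, #((S j).filter (e ∈ starEdges ·)) :=
        (card_eq_sum_ones F).trans (sum_congr rfl fun e he => (hcov e (hF he)).symm)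
    _ = _ := by
        simp only [card_filter]
        rw [sum_comm]
        exact sum_congr rfl fun j _ => sum_comm

variable [Fintype V]

def IsStarResolution (E : Finset (Sym2 V)) (S : ι → Finset (V × Finset V)) : Prop :=
  (∀ j, IsStarClass E univ (S j)) ∧ ∀ e ∈ E, ∑ j, #((S j).filter (e ∈ starEdges ·)) = 1

lemma IsStarResolution.card_eq_three_mul_sum_card (hS : IsStarResolution E S) :
    #E = 3 * ∑ j, #(S j) := by
  rw [card_eq_sum_card_filter_starEdges hS.2 subset_rfl, mul_sum]
  refine sum_congr rfl fun j _ => ?_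
  rw [card_eq_sum_ones, mul_sum, mul_one]
  refine sum_congr rfl fun b hb => ?_
  obtain ⟨h3, -, hE, -⟩ := (hS.1 j).1 b hb
  rw [filter_mem_eq_inter, inter_eq_right.mpr hE, card_starEdges h3]

lemma IsStarResolution.card_filter_mem_eq_sum (hS : IsStarResolution E S) (x : V) :
    #(E.filter (x ∈ ·)) = ∑ j, ∑ b ∈ S j, #((starEdges b).filter (x ∈ ·)) := by
  rw [card_eq_sum_card_filter_starEdges hS.2 (filter_subset _ E)]
  refine sum_congr rfl fun j _ => sum_congr rfl fun b hb => congrArg card ?_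
  obtain ⟨-, -, hE, -⟩ := (hS.1 j).1 b hb
  ext e
  simp only [mem_filter]
  exact ⟨fun ⟨⟨_, hx⟩, he⟩ => ⟨he, hx⟩, fun ⟨he, hx⟩ => ⟨⟨hE he, hx⟩, he⟩⟩

lemma IsStarResolution.even_card_filter_mem_iff (hS : IsStarResolution E S) (x : V) :
    Even #(E.filter (x ∈ ·)) ↔ Even (Fintype.card ι) := by
  rw [hS.card_filter_mem_eq_sum, even_sum_iff_even_card_odd,
    filter_true_of_mem fun j _ => (hS.1 j).odd_sum_card_starEdges_filter x, card_univ]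

end StarResolution

section Complete

variable {V : Type} [Fintype V] [DecidableEq V]

lemma completeEdges_eq_edgeFinset_top : completeEdges V = (⊤ : SimpleGraph V).edgeFinset := by
  ext e
  induction e using Sym2.ind with | _ x y => ?_
  simp only [completeEdges, mem_image, mem_filter, mem_univ, true_and, Prod.exists,
    Sym2.eq_iff, SimpleGraph.mem_edgeFinset, SimpleGraph.mem_edgeSet, SimpleGraph.top_adj]
  constructor
  · rintro ⟨a, b, hab, ⟨rfl, rfl⟩ | ⟨rfl, rfl⟩⟩
    exacts [hab, Ne.symm hab]
  · exact fun h => ⟨x, y, h, .inl ⟨rfl, rfl⟩⟩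

lemma card_completeEdges_filter_mem (x : V) :
    #((completeEdges V).filter (x ∈ ·)) = Fintype.card V - 1 := by
  rw [completeEdges_eq_edgeFinset_top, ← SimpleGraph.incidenceFinset_eq_filter,
    SimpleGraph.card_incidenceFinset_eq_degree, SimpleGraph.complete_graph_degree]

lemma two_mul_card_completeEdges :
    2 * #(completeEdges V) = Fintype.card V * (Fintype.card V - 1) := by
  rw [completeEdges_eq_edgeFinset_top, ← SimpleGraph.sum_degrees_eq_twice_card_edges]
  simp [SimpleGraph.complete_graph_degree]

end Complete

lemma IsURD.exists_isStarResolution {v s : ℕ} (h : IsURD v 0 s) :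
    ∃ S : Fin s → Finset (Fin v × Finset (Fin v)),
      IsStarResolution (completeEdges (Fin v)) S := by
  obtain ⟨_, _, _, S, -, -, -, hS, hcov⟩ := h
  exact ⟨S, hS, fun e he => by simpa using hcov e he⟩

/-- For every `v ≥ 4` and every `s`, a `(K₂, K_{1,3})`-URD(v; 0, s) does not exist. -/
theorem no_pure_star_URD (v s : ℕ) (hv : 4 ≤ v) : ¬ IsURD v 0 s := by
  intro h
  obtain ⟨S, hS⟩ := h.exists_isStarResolution
  have hedges := two_mul_card_completeEdges (V := Fin v)
  rw [hS.card_eq_three_mul_sum_card, Fintype.card_fin] at hedges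
  have hparity := hS.even_card_filter_mem_iff ⟨0, by omega⟩
  rw [card_completeEdges_filter_mem, Fintype.card_fin, Fintype.card_fin] at hparity
  have hsize (j : Fin s) : 4 * #(S j) = v := by
    simpa using (hS.1 j).four_mul_card
  obtain ⟨j₀⟩ : Nonempty (Fin s) := by
    refine Fin.pos_iff_nonempty.mp (Nat.pos_of_ne_zero fun hs => ?_)
    subst hs
    simp only [univ_eq_empty, sum_empty, mul_zero, zero_eq_mul] at hedges
    omega
  obtain ⟨q, rfl⟩ : 4 ∣ v := ⟨_, (hsize j₀).symm⟩
  have hq (j : Fin s) : #(S j) = q := by linarith [hsize j]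
  simp only [hq, sum_const, card_univ, Fintype.card_fin, smul_eq_mul] at hedges
  have hdeg : 2 * (4 * q - 1) = 3 * s :=
    Nat.eq_of_mul_eq_mul_left (by omega : 0 < q) (by linarith)
  rw [Nat.even_iff, Nat.even_iff] at hparity
  omega
end

section
/- Let v, g, t, u be non-negative integers with v = g·t·u, and set h = g(u−1)/3. Suppose there exist: (1) a 4-RGDD of type g^u (which has exactly h parallel classes); (2) for each i = 1, …, h, a (K₂, K_{1,3})-URGDD(r₁ⁱ, s₁ⁱ) of type t⁴; and (3) a (K₂, K_{1,3})-URD(g·t; r₂, s₂). Then there exists a (K₂, K_{1,3})-URD(v; r₂ + Σᵢ r₁ⁱ, s₂ + Σᵢ s₁ⁱ). -/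
open Finset

/-!
Write the point set as `X × Fin t`, where `X = Fin u × Fin g` carries the `4`-RGDD and every
point of `X` is inflated to `t` copies. An edge whose two ends lie over the same group of `X`
is covered by a copy of the URD(gt) placed on that inflated group; the `u` copies are
vertex-disjoint, so their classes glue to `r₂` matching and `s₂` star classes of the whole
point set.
Every other edge lies over an edge of `X` between distinct groups, hence over a block of a
unique parallel class `i` of the RGDD. The blocks of class `i` partition `X`, so copies of the
`i`-th URGDD of type `t⁴` placed on the inflated blocks glue to `r₁ⁱ` matching and `s₁ⁱ`
star classes.
-/

open Function

section EdgeSets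

variable {V W : Type}

theorem mk_mem_map_sym2Map {F : Finset (Sym2 W)} {f : W ↪ V} {x y : V} :
    s(x, y) ∈ F.map f.sym2Map ↔ ∃ a b, f a = x ∧ f b = y ∧ s(a, b) ∈ F := by
  constructor
  · intro h
    obtain ⟨e, he, hex⟩ := mem_map.1 h
    induction e using Sym2.ind with | _ a b => ?_
    rcases Sym2.eq_iff.1 hex with ⟨rfl, rfl⟩ | ⟨rfl, rfl⟩
    · exact ⟨a, b, rfl, rfl, he⟩
    · exact ⟨b, a, rfl, rfl, Sym2.eq_swap ▸ he⟩
  · rintro ⟨a, b, rfl, rfl, he⟩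
    exact mem_map_of_mem _ he

variable [DecidableEq V]

theorem mk_mem_image_mk {A : Finset (V × V)} (hA : ∀ p ∈ A, p.swap ∈ A) {x y : V} :
    s(x, y) ∈ A.image (fun p => s(p.1, p.2)) ↔ (x, y) ∈ A := by
  refine ⟨fun h => ?_, fun h => mem_image_of_mem _ h⟩
  obtain ⟨p, hp, hpxy⟩ := mem_image.1 h
  rcases (Sym2.mk_eq_mk_iff (p := p) (q := (x, y))).1 hpxy with rfl | rfl
  exacts [hp, hA _ hp]

theorem mk_mem_completeEdges [Fintype V] {x y : V} : s(x, y) ∈ completeEdges V ↔ x ≠ y := by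
  rw [completeEdges, mk_mem_image_mk] <;> simp [ne_comm]

theorem mk_mem_multipartiteEdges {u g : ℕ} {x y : Fin u × Fin g} :
    s(x, y) ∈ multipartiteEdges u g ↔ x.1 ≠ y.1 := by
  rw [multipartiteEdges, mk_mem_image_mk] <;> simp [ne_comm]

theorem mk_mem_blockEdges {b : Finset V} {x y : V} :
    s(x, y) ∈ blockEdges b ↔ x ∈ b ∧ y ∈ b ∧ x ≠ y := by
  rw [blockEdges, mk_mem_image_mk] <;> simp +contextual [ne_comm, and_assoc]

theorem map_completeEdges_equiv [Fintype V] [Fintype W] [DecidableEq W] (σ : W ≃ V) :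
    (completeEdges W).map σ.toEmbedding.sym2Map = completeEdges V := by
  ext e
  induction e using Sym2.ind with | _ x y => ?_
  rw [mk_mem_map_sym2Map, mk_mem_completeEdges]
  refine ⟨?_, fun hxy => ⟨σ.symm x, σ.symm y, by simp, by simp, ?_⟩⟩
  · rintro ⟨a, b, rfl, rfl, hab⟩
    exact σ.injective.ne (mk_mem_completeEdges.1 hab)
  · simpa [mk_mem_completeEdges] using hxy

end EdgeSets

theorem existsUnique_ne_zero_of_sum_eq_one {ι : Type} [Fintype ι] {f : ι → ℕ}
    (h : ∑ i, f i = 1) : ∃! i, f i ≠ 0 := by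
  classical
  obtain ⟨i, hi⟩ : ∃ i, f i ≠ 0 := by
    by_contra! hzero
    simp [hzero] at h
  refine ⟨i, hi, fun j hj => by_contra fun hji => ?_⟩
  have : f j + f i ≤ 1 := by
    rw [← h, ← sum_pair hji]
    exact sum_le_sum_of_subset (subset_univ _)
  omega

section UniformDecomposition

variable {V : Type} [DecidableEq V] {ι κ : Type} [Fintype ι] [Fintype κ]

def blockCount (M : ι → Finset (Sym2 V)) (S : κ → Finset (V × Finset V)) (e : Sym2 V) :
    ℕ :=
  (∑ i, if e ∈ M i then 1 else 0) + ∑ j, #((S j).filter fun b => e ∈ starEdges b)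

structure IsUniformDecomposition [Fintype V] (E : Finset (Sym2 V)) (M : ι → Finset (Sym2 V))
    (S : κ → Finset (V × Finset V)) : Prop where
  isMatchingClass : ∀ i, IsMatchingClass E univ (M i)
  isStarClass : ∀ j, IsStarClass E univ (S j)
  blockCount_eq_one : ∀ e ∈ E, blockCount M S e = 1

theorem HasUniformDecomp.exists_isUniformDecomposition [Fintype V] {E : Finset (Sym2 V)} {r s : ℕ}
    (h : HasUniformDecomp E r s) :
    ∃ (M : Fin r → Finset (Sym2 V)) (S : Fin s → Finset (V × Finset V)),
      IsUniformDecomposition E M S := by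
  obtain ⟨_, _, M, S, -, -, hM, hS, hcount⟩ := h
  refine ⟨M, S, hM, hS, fun e he => ?_⟩
  simpa [blockCount] using hcount e he

theorem blockCount_comp_equiv {ι' κ' : Type} [Fintype ι'] [Fintype κ'] (σ : ι' ≃ ι)
    (τ : κ' ≃ κ) (M : ι → Finset (Sym2 V)) (S : κ → Finset (V × Finset V))
    (e : Sym2 V) :
    blockCount (M ∘ σ) (S ∘ τ) e = blockCount M S e := by
  simp only [blockCount, comp_apply, σ.sum_comp (fun i => if e ∈ M i then 1 else 0),
    τ.sum_comp (fun j => #((S j).filter fun b => e ∈ starEdges b))]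

theorem IsUniformDecomposition.hasUniformDecomp [Fintype V] {E : Finset (Sym2 V)}
    {M : ι → Finset (Sym2 V)} {S : κ → Finset (V × Finset V)}
    (h : IsUniformDecomposition E M S) :
    HasUniformDecomp E (Fintype.card ι) (Fintype.card κ) := by
  refine ⟨Fin.elim0, Fin.elim0, M ∘ (Fintype.equivFin ι).symm,
    S ∘ (Fintype.equivFin κ).symm, Fin.rec0, Fin.rec0, fun i => h.isMatchingClass _,
    fun j => h.isStarClass _, fun e he => ?_⟩
  have hcount : blockCount (M ∘ (Fintype.equivFin ι).symm) (S ∘ (Fintype.equivFin κ).symm) e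
      = 1 := by
    rw [blockCount_comp_equiv, h.blockCount_eq_one e he]
  simpa [blockCount] using hcount

theorem IsMatchingClass.mono {E E' : Finset (Sym2 V)} {P : Finset V} {M : Finset (Sym2 V)}
    (hM : IsMatchingClass E P M) (hE : E ⊆ E') : IsMatchingClass E' P M :=
  ⟨fun e he => hE (hM.1 e he), hM.2⟩

theorem IsStarClass.mono {E E' : Finset (Sym2 V)} {P : Finset V} {S : Finset (V × Finset V)}
    (hS : IsStarClass E P S) (hE : E ⊆ E') : IsStarClass E' P S :=
  ⟨fun b hb => ⟨(hS.1 b hb).1, (hS.1 b hb).2.1, (hS.1 b hb).2.2.1.trans hE,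
    (hS.1 b hb).2.2.2⟩, hS.2⟩

theorem IsUniformDecomposition.blockCount_eq_zero [Fintype V] {E : Finset (Sym2 V)}
    {M : ι → Finset (Sym2 V)} {S : κ → Finset (V × Finset V)}
    (h : IsUniformDecomposition E M S) {e : Sym2 V} (he : e ∉ E) : blockCount M S e = 0 := by
  have hM : ∀ i, e ∉ M i := fun i heM => he ((h.isMatchingClass i).1 e heM)
  have hS : ∀ j, ∀ b ∈ S j, e ∉ starEdges b := fun j b hb heb =>
    he (((h.isStarClass j).1 b hb).2.2.1 heb)
  simp [blockCount, hM, filter_eq_empty_iff.2 (hS _)]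

theorem HasUniformDecomp.of_partition [Fintype V] {ι : Type} [Fintype ι] {E : Finset (Sym2 V)}
    {P : ι → Finset (Sym2 V)} {r s : ι → ℕ} (hsub : ∀ i, P i ⊆ E)
    (hcover : ∀ e ∈ E, ∃! i, e ∈ P i) (hP : ∀ i, HasUniformDecomp (P i) (r i) (s i)) :
    HasUniformDecomp E (∑ i, r i) (∑ i, s i) := by
  choose M S hD using fun i => (hP i).exists_isUniformDecomposition
  have hunion : IsUniformDecomposition E (fun p : Σ i, Fin (r i) => M p.1 p.2)
      (fun p : Σ i, Fin (s i) => S p.1 p.2) := by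
    refine ⟨fun p => ((hD p.1).isMatchingClass p.2).mono (hsub p.1),
      fun p => ((hD p.1).isStarClass p.2).mono (hsub p.1), fun e he => ?_⟩
    obtain ⟨i, hi, hunique⟩ := hcover e he
    have hsplit : blockCount (fun p : Σ i, Fin (r i) => M p.1 p.2)
        (fun p : Σ i, Fin (s i) => S p.1 p.2) e = ∑ i, blockCount (M i) (S i) e := by
      simp only [blockCount, Fintype.sum_sigma, sum_add_distrib]
    rw [hsplit, sum_eq_single i (fun j _ hji => (hD j).blockCount_eq_zero
      fun hj => hji (hunique j hj)) (by simp), (hD i).blockCount_eq_one e hi]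
  simpa using hunion.hasUniformDecomp

end UniformDecomposition

section Glue

variable {V W β : Type}

theorem eq_of_apply_eq_apply {f : β → W ↪ V} (hpart : ∀ x, ∃! b, x ∈ Set.range (f b))
    {b b' : β} {a a' : W} (h : f b a = f b' a') : b = b' ∧ a = a' := by
  obtain rfl : b = b' := (hpart (f b a)).unique ⟨a, rfl⟩ ⟨a', h.symm⟩
  exact ⟨rfl, (f b).injective h⟩

theorem eq_of_sym2Map_eq_sym2Map {f : β → W ↪ V} (hpart : ∀ x, ∃! b, x ∈ Set.range (f b))
    {b b' : β} {e e' : Sym2 W} (h : (f b).sym2Map e = (f b').sym2Map e') :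
    b = b' ∧ e = e' := by
  induction e using Sym2.ind with | _ a _ => ?_
  have ha : f b a ∈ Sym2.map (f b') e' := by
    rw [← Embedding.sym2Map_apply, ← h]
    exact Sym2.mem_map.2 ⟨a, Sym2.mem_mk_left _ _, rfl⟩
  obtain ⟨a', -, ha'⟩ := Sym2.mem_map.1 ha
  obtain rfl : b = b' := (eq_of_apply_eq_apply hpart ha').1.symm
  exact ⟨rfl, (f b).sym2Map.injective h⟩

variable [DecidableEq V] [DecidableEq W]

def starMap (φ : W ↪ V) : W × Finset W ↪ V × Finset V :=
  φ.prodMap (mapEmbedding φ).toEmbedding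

theorem starEdges_starMap (φ : W ↪ V) (p : W × Finset W) :
    starEdges (starMap φ p) = (starEdges p).map φ.sym2Map := by
  simp [starEdges, starMap, map_eq_image, image_image, comp_def]

theorem starVerts_starMap (φ : W ↪ V) (p : W × Finset W) :
    starVerts (starMap φ p) = (starVerts p).map φ := by
  simp [starVerts, starMap, map_insert]

variable [Fintype β]

def glueEdges (f : β → W ↪ V) (F : Finset (Sym2 W)) : Finset (Sym2 V) :=
  univ.biUnion fun b => F.map (f b).sym2Map

def glueStars (f : β → W ↪ V) (S : Finset (W × Finset W)) : Finset (V × Finset V) :=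
  univ.biUnion fun b => S.map (starMap (f b))

variable {f : β → W ↪ V} (hpart : ∀ x, ∃! b, x ∈ Set.range (f b))
include hpart

omit [DecidableEq W] in
theorem sym2Map_mem_glueEdges {F : Finset (Sym2 W)} {b : β} {e : Sym2 W} :
    (f b).sym2Map e ∈ glueEdges f F ↔ e ∈ F := by
  refine ⟨fun h => ?_, fun h => mem_biUnion.2 ⟨b, mem_univ _, mem_map_of_mem _ h⟩⟩
  obtain ⟨b', -, he⟩ := mem_biUnion.1 h
  obtain ⟨e', he', hee'⟩ := mem_map.1 he
  obtain ⟨rfl, rfl⟩ := eq_of_sym2Map_eq_sym2Map hpart hee'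
  exact he'

theorem filter_glueStars {S : Finset (W × Finset W)} {b : β} {e : Sym2 W} :
    (glueStars f S).filter (fun p => (f b).sym2Map e ∈ starEdges p)
      = (S.filter fun p => e ∈ starEdges p).map (starMap (f b)) := by
  ext q
  simp only [glueStars, mem_filter, mem_biUnion, mem_map, mem_univ, true_and]
  constructor
  · rintro ⟨⟨b', p, hp, rfl⟩, he⟩
    rw [starEdges_starMap] at he
    obtain ⟨e', he', hee'⟩ := mem_map.1 he
    obtain ⟨rfl, rfl⟩ := eq_of_sym2Map_eq_sym2Map hpart hee'
    exact ⟨p, ⟨hp, he'⟩, rfl⟩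
  · rintro ⟨p, ⟨hp, he⟩, rfl⟩
    exact ⟨⟨b, p, hp, rfl⟩, starEdges_starMap (f b) p ▸ mem_map_of_mem _ he⟩

theorem blockCount_glue {ι κ : Type} [Fintype ι] [Fintype κ] (M : ι → Finset (Sym2 W))
    (S : κ → Finset (W × Finset W)) (b : β) (e : Sym2 W) :
    blockCount (glueEdges f ∘ M) (glueStars f ∘ S) ((f b).sym2Map e) = blockCount M S e := by
  simp only [blockCount, comp_apply, sym2Map_mem_glueEdges hpart, filter_glueStars hpart,
    card_map]

variable [Fintype V] [Fintype W]

theorem IsMatchingClass.glue {F M : Finset (Sym2 W)} (hM : IsMatchingClass F univ M) :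
    IsMatchingClass (glueEdges f F) univ (glueEdges f M) := by
  refine ⟨fun e he => ?_, fun _ _ _ _ => mem_univ _, fun x _ => ?_⟩
  · obtain ⟨b, -, he⟩ := mem_biUnion.1 he
    obtain ⟨e₀, he₀, rfl⟩ := mem_map.1 he
    exact (sym2Map_mem_glueEdges hpart).2 (hM.1 e₀ he₀)
  · obtain ⟨b, a, rfl⟩ := (hpart x).exists
    obtain ⟨e, ⟨he, hae⟩, hunique⟩ := hM.2.2 a (mem_univ a)
    refine ⟨(f b).sym2Map e, ⟨(sym2Map_mem_glueEdges hpart).2 he,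
      Sym2.mem_map.2 ⟨a, hae, rfl⟩⟩, ?_⟩
    rintro e' ⟨he', hae'⟩
    obtain ⟨b', -, he'⟩ := mem_biUnion.1 he'
    obtain ⟨e₀, he₀, rfl⟩ := mem_map.1 he'
    obtain ⟨a', ha'e₀, ha'⟩ := Sym2.mem_map.1 hae'
    obtain ⟨rfl, rfl⟩ := eq_of_apply_eq_apply hpart ha'
    rw [hunique e₀ ⟨he₀, ha'e₀⟩]

theorem IsStarClass.glue {F : Finset (Sym2 W)} {S : Finset (W × Finset W)}
    (hS : IsStarClass F univ S) : IsStarClass (glueEdges f F) univ (glueStars f S) := by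
  refine ⟨fun q hq => ?_, fun x _ => ?_⟩
  · obtain ⟨b, -, hq⟩ := mem_biUnion.1 hq
    obtain ⟨p, hp, rfl⟩ := mem_map.1 hq
    obtain ⟨hcard, hcenter, hedges, -⟩ := hS.1 p hp
    refine ⟨by simpa [starMap] using hcard, by simpa [starMap] using hcenter, ?_,
      subset_univ _⟩
    rw [starEdges_starMap]
    intro e he
    obtain ⟨e₀, he₀, rfl⟩ := mem_map.1 he
    exact (sym2Map_mem_glueEdges hpart).2 (hedges he₀)
  · obtain ⟨b, a, rfl⟩ := (hpart x).exists
    obtain ⟨p, ⟨hp, hap⟩, hunique⟩ := hS.2 a (mem_univ a)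
    refine ⟨starMap (f b) p, ⟨mem_biUnion.2 ⟨b, mem_univ _, mem_map_of_mem _ hp⟩,
      starVerts_starMap (f b) p ▸ mem_map_of_mem _ hap⟩, ?_⟩
    rintro q ⟨hq, haq⟩
    obtain ⟨b', -, hq⟩ := mem_biUnion.1 hq
    obtain ⟨p', hp', rfl⟩ := mem_map.1 hq
    rw [starVerts_starMap] at haq
    obtain ⟨a', ha'p', ha'⟩ := mem_map.1 haq
    obtain ⟨rfl, rfl⟩ := eq_of_apply_eq_apply hpart ha'
    rw [hunique p' ⟨hp', ha'p'⟩]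

theorem HasUniformDecomp.glue {F : Finset (Sym2 W)} {r s : ℕ} (h : HasUniformDecomp F r s) :
    HasUniformDecomp (glueEdges f F) r s := by
  obtain ⟨M, S, hD⟩ := h.exists_isUniformDecomposition
  have hglued : IsUniformDecomposition (glueEdges f F) (glueEdges f ∘ M) (glueStars f ∘ S) := by
    refine ⟨fun i => (hD.isMatchingClass i).glue hpart,
      fun j => (hD.isStarClass j).glue hpart, fun e he => ?_⟩
    obtain ⟨b, -, he⟩ := mem_biUnion.1 he
    obtain ⟨e₀, he₀, rfl⟩ := mem_map.1 he
    rw [blockCount_glue hpart, hD.blockCount_eq_one e₀ he₀]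
  simpa using hglued.hasUniformDecomp

end Glue

theorem HasUniformDecomp.of_completeEdges_equiv {V W : Type} [Fintype V] [DecidableEq V]
    [Fintype W] [DecidableEq W] (σ : W ≃ V) {r s : ℕ}
    (h : HasUniformDecomp (completeEdges W) r s) : HasUniformDecomp (completeEdges V) r s := by
  have hglued := h.glue (f := fun _ : Unit => σ.toEmbedding)
    fun x => ⟨(), ⟨σ.symm x, by simp⟩, fun _ _ => rfl⟩
  rwa [glueEdges, univ_unique, singleton_biUnion, map_completeEdges_equiv] at hglued

theorem existsUnique_mem_biUnion_blockEdges {X ι : Type} [DecidableEq X] [Fintype ι]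
    {C : ι → Finset (Finset X)} {e : Sym2 X}
    (h : ∑ i, #((C i).filter fun b => e ∈ blockEdges b) = 1) :
    ∃! i, e ∈ (C i).biUnion blockEdges :=
  (existsUnique_congr fun i => by simp).1 (existsUnique_ne_zero_of_sum_eq_one h)

section Filling

variable {X : Type} {t n : ℕ}

noncomputable def blockEmb (t : ℕ) {b : Finset X} (hb : #b = n) : Fin n × Fin t ↪ X × Fin t :=
  ((b.equivFinOfCardEq hb).symm.toEmbedding.trans (Embedding.subtype _)).prodMap
    (Embedding.refl _)

theorem mem_range_blockEmb {b : Finset X} (hb : #b = n) {p : X × Fin t} :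
    p ∈ Set.range (blockEmb t hb) ↔ p.1 ∈ b := by
  refine ⟨?_, fun hp => ⟨(b.equivFinOfCardEq hb ⟨p.1, hp⟩, p.2), by simp [blockEmb]⟩⟩
  rintro ⟨a, rfl⟩
  simp [blockEmb]

variable [DecidableEq X]

theorem mk_mem_map_blockEmb {b : Finset X} (hb : #b = n) {p q : X × Fin t} :
    s(p, q) ∈ (multipartiteEdges n t).map (blockEmb t hb).sym2Map ↔
      s(p.1, q.1) ∈ blockEdges b := by
  rw [mk_mem_map_sym2Map, mk_mem_blockEdges]
  constructor
  · rintro ⟨a, a', rfl, rfl, haa'⟩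
    simpa [blockEmb, mk_mem_multipartiteEdges] using haa'
  · rintro ⟨hp, hq, hpq⟩
    refine ⟨(b.equivFinOfCardEq hb ⟨p.1, hp⟩, p.2),
      (b.equivFinOfCardEq hb ⟨q.1, hq⟩, q.2), by simp [blockEmb], by simp [blockEmb], ?_⟩
    simpa [mk_mem_multipartiteEdges] using hpq

variable [Fintype X]

def edgesOver (t : ℕ) (D : Finset (Sym2 X)) : Finset (Sym2 (X × Fin t)) :=
  (completeEdges (X × Fin t)).filter fun e => e.map Prod.fst ∈ D

theorem mk_mem_edgesOver {D : Finset (Sym2 X)} {p q : X × Fin t} :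
    s(p, q) ∈ edgesOver t D ↔ p ≠ q ∧ s(p.1, q.1) ∈ D := by
  simp [edgesOver, mk_mem_completeEdges]

theorem hasUniformDecomp_edgesOver_of_isURGDD {r s : ℕ} {C : Finset (Finset X)}
    (hcard : ∀ b ∈ C, #b = n) (hC : ∀ x, ∃! b, b ∈ C ∧ x ∈ b) (h : IsURGDD t n r s) :
    HasUniformDecomp (edgesOver t (C.biUnion blockEdges)) r s := by
  have hpart : ∀ p, ∃! b : C, p ∈ Set.range (blockEmb t (hcard b b.2)) := by
    intro p
    obtain ⟨b, ⟨hb, hpb⟩, hunique⟩ := hC p.1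
    refine ⟨⟨b, hb⟩, (mem_range_blockEmb _).2 hpb, fun b' hb' => Subtype.ext ?_⟩
    exact hunique b' ⟨b'.2, (mem_range_blockEmb _).1 hb'⟩
  convert HasUniformDecomp.glue hpart h using 1
  ext e
  induction e using Sym2.ind with | _ p q => ?_
  simp only [mk_mem_edgesOver, glueEdges, mem_biUnion, mem_univ, true_and,
    mk_mem_map_blockEmb, Subtype.exists, exists_prop]
  refine ⟨fun h => h.2, fun h => ⟨?_, h⟩⟩
  obtain ⟨b, -, hpq⟩ := h
  exact fun hpq' => (mk_mem_blockEdges.1 hpq).2.2 (congrArg Prod.fst hpq')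

end Filling

section Groups

variable {u g t : ℕ}

def groupEdges (u g t : ℕ) : Finset (Sym2 ((Fin u × Fin g) × Fin t)) :=
  (completeEdges _).filter fun e => (e.map fun p => p.1.1).IsDiag

theorem mk_mem_groupEdges {p q : (Fin u × Fin g) × Fin t} :
    s(p, q) ∈ groupEdges u g t ↔ p ≠ q ∧ p.1.1 = q.1.1 := by
  simp [groupEdges, mk_mem_completeEdges]

def groupEmb (t : ℕ) (j : Fin u) : Fin g × Fin t ↪ (Fin u × Fin g) × Fin t :=
  ⟨fun p => ((j, p.1), p.2), fun p q h => by simpa [Prod.ext_iff] using h⟩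

theorem hasUniformDecomp_groupEdges {r s : ℕ} (h : IsURD (g * t) r s) :
    HasUniformDecomp (groupEdges u g t) r s := by
  have hpart : ∀ p : (Fin u × Fin g) × Fin t, ∃! j, p ∈ Set.range (groupEmb t j) := fun p =>
    ⟨p.1.1, ⟨(p.1.2, p.2), rfl⟩, by rintro j ⟨a, rfl⟩; rfl⟩
  convert (h.of_completeEdges_equiv finProdFinEquiv.symm).glue hpart using 1
  ext e
  induction e using Sym2.ind with | _ p q => ?_
  simp only [mk_mem_groupEdges, glueEdges, mem_biUnion, mem_univ, true_and, mk_mem_map_sym2Map,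
    mk_mem_completeEdges]
  constructor
  · rintro ⟨hpq, hg⟩
    refine ⟨p.1.1, (p.1.2, p.2), (q.1.2, q.2), rfl, by simp [groupEmb, hg], ?_⟩
    contrapose! hpq
    simp_all [Prod.ext_iff]
  · rintro ⟨j, a, a', rfl, rfl, haa'⟩
    exact ⟨(groupEmb t j).injective.ne haa', rfl⟩

theorem existsUnique_mem_groupEdges_or_edgesOver {ι : Type}
    {C : ι → Finset (Finset (Fin u × Fin g))}
    (hsub : ∀ i, ∀ b ∈ C i, blockEdges b ⊆ multipartiteEdges u g)
    (hcover : ∀ e ∈ multipartiteEdges u g, ∃! i, e ∈ (C i).biUnion blockEdges) :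
    ∀ e ∈ completeEdges ((Fin u × Fin g) × Fin t), ∃! o : Option ι,
      e ∈ o.elim (groupEdges u g t) fun i => edgesOver t ((C i).biUnion blockEdges) := by
  intro e he
  induction e using Sym2.ind with | _ p q => ?_
  have hpq := mk_mem_completeEdges.1 he
  have hgroups : ∀ i, s(p, q) ∈ edgesOver t ((C i).biUnion blockEdges) → p.1.1 ≠ q.1.1 := by
    intro i hi
    obtain ⟨b, hb, hpqb⟩ := mem_biUnion.1 (mk_mem_edgesOver.1 hi).2
    exact mk_mem_multipartiteEdges.1 (hsub i b hb hpqb)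
  by_cases hg : p.1.1 = q.1.1
  · refine ⟨none, mk_mem_groupEdges.2 ⟨hpq, hg⟩, ?_⟩
    rintro (_ | i) hi
    exacts [rfl, absurd hg (hgroups i hi)]
  · obtain ⟨i, hi, hunique⟩ := hcover _ (mk_mem_multipartiteEdges.2 hg)
    refine ⟨some i, mk_mem_edgesOver.2 ⟨hpq, hi⟩, ?_⟩
    rintro (_ | j) hj
    · exact absurd (mk_mem_groupEdges.1 hj).2 hg
    · exact congrArg some (hunique j (mk_mem_edgesOver.1 hj).2)

end Groups

theorem RGDD_construction_general (g t u v h : ℕ) (hv : v = g * t * u)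
    (r₁ s₁ : Fin h → ℕ) (r₂ s₂ : ℕ)
    (h1 : Is4RGDD g u h)
    (h2 : ∀ i, IsURGDD t 4 (r₁ i) (s₁ i))
    (h3 : IsURD (g * t) r₂ s₂) :
    IsURD v (r₂ + ∑ i, r₁ i) (s₂ + ∑ i, s₁ i) := by
  obtain ⟨C, hC, hcount⟩ := h1
  have hparts : ∀ o : Option (Fin h), HasUniformDecomp
      (o.elim (groupEdges u g t) fun i => edgesOver t ((C i).biUnion blockEdges))
      (o.elim r₂ r₁) (o.elim s₂ s₁)
    | none => hasUniformDecomp_groupEdges h3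
    | some i => hasUniformDecomp_edgesOver_of_isURGDD (fun b hb => ((hC i).1 b hb).1)
        (fun x => (hC i).2 x (mem_univ x)) (h2 i)
  have hsplit := HasUniformDecomp.of_partition (fun o => by cases o <;> exact filter_subset _ _)
    (existsUnique_mem_groupEdges_or_edgesOver (fun i b hb => ((hC i).1 b hb).2.1)
      fun e he => existsUnique_mem_biUnion_blockEdges (hcount e he)) hparts
  rw [Fintype.sum_option, Fintype.sum_option] at hsplit
  exact hsplit.of_completeEdges_equiv (Fintype.equivFinOfCardEq (by simp [hv]; ring))

/-- Filling construction from a `4`-RGDD: if there exist a `4`-RGDD of type `g^u` (with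
its `h = g(u−1)/3` parallel classes), a `(K₂, K_{1,3})`-URGDD(r₁ⁱ, s₁ⁱ) of type `t⁴` for
each `i = 1, …, h`, and a `(K₂, K_{1,3})`-URD(gt; r₂, s₂), then there exists a
`(K₂, K_{1,3})`-URD(v; r₂ + Σᵢ r₁ⁱ, s₂ + Σᵢ s₁ⁱ) for `v = gtu`. -/
theorem RGDD_construction (g t u v h : ℕ) (hv : v = g * t * u)
    (hh : h = g * (u - 1) / 3)
    (r₁ s₁ : Fin h → ℕ) (r₂ s₂ : ℕ)
    (h1 : Is4RGDD g u h)
    (h2 : ∀ i, IsURGDD t 4 (r₁ i) (s₁ i))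
    (h3 : IsURD (g * t) r₂ s₂) :
    IsURD v (r₂ + ∑ i, r₁ i) (s₂ + ∑ i, s₁ i) :=
  RGDD_construction_general g t u v h hv r₁ s₁ r₂ s₂ h1 h2 h3
end

section
/- There exists a (K₂, K_{1,3})-URD(8; 1, 4); that is, the edge set of the complete graph K₈ can be decomposed into 1 perfect matching and 4 parallel classes each consisting of two vertex-disjoint copies of K_{1,3} covering all 8 vertices. -/
open Finset

/-!
Counting degrees (`7 = 1 + 4 + 2c`, where `c` is the number of stars centred at a vertex) shows
that every vertex is the centre of exactly one star. So the four star classes amount to an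
orientation of `K₈` minus the matching with all out-degrees `3`, whose eight out-stars are paired
so that each pair spans the vertex set; an explicit such configuration is verified by `decide`.
-/

lemma IsMatchingClass.mk' {V : Type} [DecidableEq V] {E : Finset (Sym2 V)} {P : Finset V}
    {M : Finset (Sym2 V)} (h_sub : ∀ e ∈ M, e ∈ E) (h_mem : ∀ e ∈ M, ∀ x ∈ e, x ∈ P)
    (h_cover : ∀ x ∈ P, ∃ e ∈ M, x ∈ e)
    (h_unique : ∀ x ∈ P, ∀ e ∈ M, ∀ f ∈ M, x ∈ e → x ∈ f → e = f) :
    IsMatchingClass E P M := by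
  refine ⟨h_sub, h_mem, fun x hx => ?_⟩
  obtain ⟨e, he, hxe⟩ := h_cover x hx
  exact ⟨e, ⟨he, hxe⟩, fun f ⟨hf, hxf⟩ => h_unique x hx f hf e he hxf hxe⟩

lemma IsStarClass.mk' {V : Type} [DecidableEq V] {E : Finset (Sym2 V)} {P : Finset V}
    {C : Finset (V × Finset V)}
    (h_star : ∀ b ∈ C, b.2.card = 3 ∧ b.1 ∉ b.2 ∧ starEdges b ⊆ E ∧ starVerts b ⊆ P)
    (h_cover : ∀ x ∈ P, ∃ b ∈ C, x ∈ starVerts b)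
    (h_unique : ∀ x ∈ P, ∀ b ∈ C, ∀ b' ∈ C, x ∈ starVerts b → x ∈ starVerts b' → b = b') :
    IsStarClass E P C := by
  refine ⟨h_star, fun x hx => ?_⟩
  obtain ⟨b, hb, hxb⟩ := h_cover x hx
  exact ⟨b, ⟨hb, hxb⟩, fun b' ⟨hb', hxb'⟩ => h_unique x hx b' hb' b hb hxb' hxb⟩

def matching8 : Finset (Sym2 (Fin 8)) :=
  {s(1, 7), s(3, 5), s(0, 4), s(2, 6)}

def starClasses8 : Fin 4 → Finset (Fin 8 × Finset (Fin 8)) :=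
  ![{(0, {1, 2, 3}), (4, {5, 6, 7})},
    {(5, {0, 1, 2}), (3, {4, 6, 7})},
    {(6, {0, 1, 5}), (2, {3, 4, 7})},
    {(7, {0, 5, 6}), (1, {2, 3, 4})}]

lemma isMatchingClass_matching8 :
    IsMatchingClass (completeEdges (Fin 8)) univ matching8 := by
  apply IsMatchingClass.mk' <;> decide

lemma isStarClass_starClasses8 (k : Fin 4) :
    IsStarClass (completeEdges (Fin 8)) univ (starClasses8 k) := by
  fin_cases k <;> apply IsStarClass.mk' <;>
    simp only [starClasses8, Fin.reduceFinMk, Matrix.cons_val, forall_mem_insert,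
      exists_mem_insert, mem_singleton, forall_eq, exists_eq_left] <;>
    decide

lemma matching8_starClasses8_cover_completeEdges_once : ∀ e ∈ completeEdges (Fin 8),
    (if e ∈ matching8 then 1 else 0) +
      ∑ k, ((starClasses8 k).filter (fun b => e ∈ starEdges b)).card = 1 := by
  decide

/-- There exists a `(K₂, K_{1,3})`-URD(8; 1, 4). -/
theorem URD_8 : IsURD 8 1 4 := by
  refine ⟨![], ![], ![matching8], starClasses8, finZeroElim, finZeroElim,
    Fin.forall_fin_one.2 isMatchingClass_matching8, isStarClass_starClasses8, fun e he => ?_⟩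
  simpa using matching8_starClasses8_cover_completeEdges_once e he
end

section
/- There exists a (K₂, K_{1,3})-URD(12; 5, 4); that is, the edge set of the complete graph K₁₂ can be decomposed into 5 perfect matchings and 4 parallel classes each consisting of three vertex-disjoint copies of K_{1,3} covering all 12 vertices. -/
open Finset

def urd_m0 : Finset (Sym2 (Fin 12)) := {s(0,6), s(1,4), s(2,8), s(3,5), s(7,11), s(9,10)}
def urd_m1 : Finset (Sym2 (Fin 12)) := {s(0,10), s(1,5), s(2,11), s(3,7), s(4,9), s(6,8)}
def urd_m2 : Finset (Sym2 (Fin 12)) := {s(0,3), s(1,9), s(2,4), s(5,10), s(6,11), s(7,8)}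
def urd_m3 : Finset (Sym2 (Fin 12)) := {s(0,4), s(1,10), s(2,7), s(3,11), s(5,8), s(6,9)}
def urd_m4 : Finset (Sym2 (Fin 12)) := {s(0,8), s(1,11), s(2,10), s(3,4), s(5,6), s(7,9)}
def urd_c0 : Finset (Fin 12 × Finset (Fin 12)) := {(10, {4,6,11}), (1, {3,7,8}), (9, {0,2,5})}
def urd_c1 : Finset (Fin 12 × Finset (Fin 12)) := {(2, {5,1,3}), (7, {6,4,10}), (11, {8,9,0})}
def urd_c2 : Finset (Fin 12 × Finset (Fin 12)) := {(5, {0,7,11}), (6, {2,3,1}), (8, {4,9,10})}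
def urd_c3 : Finset (Fin 12 × Finset (Fin 12)) := {(4, {6,5,11}), (3, {10,9,8}), (0, {7,2,1})}
def urdMM : Fin 5 → Finset (Sym2 (Fin 12)) := ![urd_m0, urd_m1, urd_m2, urd_m3, urd_m4]
def urdSS : Fin 4 → Finset (Fin 12 × Finset (Fin 12)) := ![urd_c0, urd_c1, urd_c2, urd_c3]

lemma mem_completeEdges' {V : Type} [Fintype V] [DecidableEq V] (e : Sym2 V) :
    e ∈ completeEdges V ↔ ¬ e.IsDiag := by
  induction e using Sym2.ind with
  | _ a b =>
    simp only [completeEdges, mem_image, mem_filter, mem_univ, true_and, Sym2.mk_isDiag_iff]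
    constructor
    · rintro ⟨⟨x, y⟩, hxy, h⟩ rfl
      rw [Sym2.eq_iff] at h
      rcases h with ⟨h1, h2⟩ | ⟨h1, h2⟩ <;> exact hxy (h1.trans h2.symm)
    · intro h; exact ⟨(a, b), h, rfl⟩

lemma urd_euniq {α : Type} [DecidableEq α] {C : Finset α} {p : α → Prop} [DecidablePred p]
    (h : (C.filter p).card = 1) : ∃! b, b ∈ C ∧ p b := by
  obtain ⟨a, ha⟩ := Finset.card_eq_one.mp h
  have hm := Finset.mem_filter.mp (ha ▸ Finset.mem_singleton_self a)
  refine ⟨a, hm, fun b hb => ?_⟩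
  have hb' : b ∈ C.filter p := Finset.mem_filter.mpr hb
  rw [ha] at hb'
  exact Finset.mem_singleton.mp hb'

lemma urd_starEdges_sub {V : Type} [Fintype V] [DecidableEq V] {b : V × Finset V}
    (h : b.1 ∉ b.2) : starEdges b ⊆ completeEdges V := by
  intro e he
  simp only [starEdges, mem_image] at he
  obtain ⟨l, hl, rfl⟩ := he
  rw [mem_completeEdges', Sym2.mk_isDiag_iff]
  rintro rfl
  exact h hl

lemma urd_matching_ok (M : Finset (Sym2 (Fin 12))) (h1 : ∀ e ∈ M, ¬ e.IsDiag)
    (h2 : ∀ x : Fin 12, (M.filter (fun e => x ∈ e)).card = 1) :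
    IsMatchingClass (completeEdges (Fin 12)) Finset.univ M :=
  ⟨fun e he => (mem_completeEdges' e).mpr (h1 e he), fun _ _ x _ => mem_univ x,
    fun x _ => urd_euniq (h2 x)⟩

lemma urd_star_ok (C : Finset (Fin 12 × Finset (Fin 12)))
    (h1' : C.filter (fun b => b.2.card = 3 ∧ b.1 ∉ b.2) = C)
    (h2 : ∀ x : Fin 12, (C.filter (fun b => x ∈ starVerts b)).card = 1) :
    IsStarClass (completeEdges (Fin 12)) Finset.univ C := by
  have h1 : ∀ b ∈ C, b.2.card = 3 ∧ b.1 ∉ b.2 := by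
    intro b hb
    rw [← h1'] at hb
    exact (Finset.mem_filter.mp hb).2
  exact ⟨fun b hb => ⟨(h1 b hb).1, (h1 b hb).2, urd_starEdges_sub (h1 b hb).2,
      fun x _ => mem_univ x⟩,
    fun x _ => urd_euniq (h2 x)⟩


set_option maxRecDepth 100000 in
/-- There exists a `(K₂, K_{1,3})`-URD(12; 5, 4). -/
theorem URD_12 : IsURD 12 5 4 := by
  refine ⟨fun i => i.elim0, fun i => i.elim0, urdMM, urdSS,
    fun i => i.elim0, fun i => i.elim0, ?_, ?_, ?_⟩
  · intro i
    apply urd_matching_ok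
    · revert i; decide
    · revert i; decide
  · intro j
    apply urd_star_ok
    · revert j; decide
    · revert j; decide
  · have key : ∀ a b : Fin 12, a ≠ b →
        ((∑ i : Fin 5, if s(a, b) ∈ urdMM i then 1 else 0)
          + ∑ j : Fin 4, ((urdSS j).filter (fun c => s(a, b) ∈ starEdges c)).card) = 1 := by
      decide
    intro e he
    rw [mem_completeEdges'] at he
    induction e using Sym2.ind with
    | _ a b =>
      rw [Sym2.mk_isDiag_iff] at he
      simp only [Finset.univ_eq_empty, Finset.sum_empty, zero_add, add_zero]
      exact key a b he
end

section
/- There exists a (K₂, K_{1,3})-IURD(16, 4; [3, 0], [0, 8]); that is, on a 16-element vertex set with a fixed 4-element hole H, the graph K₁₆ minus the edges inside H admits a decomposition into 3 partial classes of copies of K₂, each perfectly matching the 12 points outside H, and 8 full parallel classes, each consisting of four vertex-disjoint copies of K_{1,3} covering all 16 points. -/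
open Finset

abbrev W16 := Fin 12 ⊕ Fin 4

theorem exu {α : Type} [DecidableEq α] {s : Finset α} {p : α → Prop} [DecidablePred p]
    (h : (s.filter p).card = 1) : ∃! a, a ∈ s ∧ p a := by
  obtain ⟨a, ha⟩ := Finset.card_eq_one.mp h
  refine ⟨a, ?_, ?_⟩
  · have h2 : a ∈ Finset.filter p s := ha ▸ Finset.mem_singleton_self a
    exact ⟨(Finset.mem_filter.mp h2).1, (Finset.mem_filter.mp h2).2⟩
  · intro b hb
    have h2 : b ∈ Finset.filter p s := Finset.mem_filter.mpr ⟨hb.1, hb.2⟩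
    rw [ha] at h2
    exact Finset.mem_singleton.mp h2

theorem mem_holey {a b : W16} (h1 : a ≠ b) (h2 : ¬(a.isRight ∧ b.isRight)) :
    s(a, b) ∈ holeyEdges 12 4 :=
  Finset.mem_image.mpr ⟨(a, b), Finset.mem_filter.mpr ⟨Finset.mem_univ _, h1, h2⟩, rfl⟩

theorem holey_elim {P : Sym2 W16 → Prop}
    (hP : ∀ a b : W16, a ≠ b → ¬(a.isRight ∧ b.isRight) → P s(a, b)) :
    ∀ e ∈ holeyEdges 12 4, P e := by
  intro e he
  obtain ⟨p, hp, rfl⟩ := Finset.mem_image.mp he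
  have h := Finset.mem_filter.mp hp
  exact hP p.1 p.2 h.2.1 h.2.2

def vM : Fin 3 → Finset (Sym2 (Fin 12 ⊕ Fin 4)) :=
  ![{s((Sum.inl 0 : Fin 12 ⊕ Fin 4), (Sum.inl 1 : Fin 12 ⊕ Fin 4)), s((Sum.inl 2 : Fin 12 ⊕ Fin 4), (Sum.inl 3 : Fin 12 ⊕ Fin 4)), s((Sum.inl 4 : Fin 12 ⊕ Fin 4), (Sum.inl 7 : Fin 12 ⊕ Fin 4)), s((Sum.inl 5 : Fin 12 ⊕ Fin 4), (Sum.inl 10 : Fin 12 ⊕ Fin 4)), s((Sum.inl 6 : Fin 12 ⊕ Fin 4), (Sum.inl 11 : Fin 12 ⊕ Fin 4)), s((Sum.inl 8 : Fin 12 ⊕ Fin 4), (Sum.inl 9 : Fin 12 ⊕ Fin 4))},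
    {s((Sum.inl 0 : Fin 12 ⊕ Fin 4), (Sum.inl 2 : Fin 12 ⊕ Fin 4)), s((Sum.inl 1 : Fin 12 ⊕ Fin 4), (Sum.inl 9 : Fin 12 ⊕ Fin 4)), s((Sum.inl 3 : Fin 12 ⊕ Fin 4), (Sum.inl 5 : Fin 12 ⊕ Fin 4)), s((Sum.inl 4 : Fin 12 ⊕ Fin 4), (Sum.inl 10 : Fin 12 ⊕ Fin 4)), s((Sum.inl 6 : Fin 12 ⊕ Fin 4), (Sum.inl 7 : Fin 12 ⊕ Fin 4)), s((Sum.inl 8 : Fin 12 ⊕ Fin 4), (Sum.inl 11 : Fin 12 ⊕ Fin 4))},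
    {s((Sum.inl 0 : Fin 12 ⊕ Fin 4), (Sum.inl 5 : Fin 12 ⊕ Fin 4)), s((Sum.inl 1 : Fin 12 ⊕ Fin 4), (Sum.inl 11 : Fin 12 ⊕ Fin 4)), s((Sum.inl 2 : Fin 12 ⊕ Fin 4), (Sum.inl 4 : Fin 12 ⊕ Fin 4)), s((Sum.inl 3 : Fin 12 ⊕ Fin 4), (Sum.inl 9 : Fin 12 ⊕ Fin 4)), s((Sum.inl 6 : Fin 12 ⊕ Fin 4), (Sum.inl 10 : Fin 12 ⊕ Fin 4)), s((Sum.inl 7 : Fin 12 ⊕ Fin 4), (Sum.inl 8 : Fin 12 ⊕ Fin 4))}]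

def vS : Fin 8 → Finset ((Fin 12 ⊕ Fin 4) × Finset (Fin 12 ⊕ Fin 4)) :=
  ![{((Sum.inr 0 : Fin 12 ⊕ Fin 4), {(Sum.inl 8 : Fin 12 ⊕ Fin 4), (Sum.inl 9 : Fin 12 ⊕ Fin 4), (Sum.inl 11 : Fin 12 ⊕ Fin 4)}), ((Sum.inl 5 : Fin 12 ⊕ Fin 4), {(Sum.inr 1 : Fin 12 ⊕ Fin 4), (Sum.inl 4 : Fin 12 ⊕ Fin 4), (Sum.inl 1 : Fin 12 ⊕ Fin 4)}), ((Sum.inl 6 : Fin 12 ⊕ Fin 4), {(Sum.inr 2 : Fin 12 ⊕ Fin 4), (Sum.inl 2 : Fin 12 ⊕ Fin 4), (Sum.inl 3 : Fin 12 ⊕ Fin 4)}), ((Sum.inl 7 : Fin 12 ⊕ Fin 4), {(Sum.inr 3 : Fin 12 ⊕ Fin 4), (Sum.inl 10 : Fin 12 ⊕ Fin 4), (Sum.inl 0 : Fin 12 ⊕ Fin 4)})},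
    {((Sum.inr 1 : Fin 12 ⊕ Fin 4), {(Sum.inl 4 : Fin 12 ⊕ Fin 4), (Sum.inl 9 : Fin 12 ⊕ Fin 4), (Sum.inl 10 : Fin 12 ⊕ Fin 4)}), ((Sum.inl 0 : Fin 12 ⊕ Fin 4), {(Sum.inr 3 : Fin 12 ⊕ Fin 4), (Sum.inl 11 : Fin 12 ⊕ Fin 4), (Sum.inl 6 : Fin 12 ⊕ Fin 4)}), ((Sum.inl 2 : Fin 12 ⊕ Fin 4), {(Sum.inr 2 : Fin 12 ⊕ Fin 4), (Sum.inl 5 : Fin 12 ⊕ Fin 4), (Sum.inl 8 : Fin 12 ⊕ Fin 4)}), ((Sum.inl 3 : Fin 12 ⊕ Fin 4), {(Sum.inr 0 : Fin 12 ⊕ Fin 4), (Sum.inl 7 : Fin 12 ⊕ Fin 4), (Sum.inl 1 : Fin 12 ⊕ Fin 4)})},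
    {((Sum.inr 2 : Fin 12 ⊕ Fin 4), {(Sum.inl 0 : Fin 12 ⊕ Fin 4), (Sum.inl 1 : Fin 12 ⊕ Fin 4), (Sum.inl 11 : Fin 12 ⊕ Fin 4)}), ((Sum.inl 2 : Fin 12 ⊕ Fin 4), {(Sum.inr 0 : Fin 12 ⊕ Fin 4), (Sum.inl 10 : Fin 12 ⊕ Fin 4), (Sum.inl 7 : Fin 12 ⊕ Fin 4)}), ((Sum.inl 4 : Fin 12 ⊕ Fin 4), {(Sum.inr 3 : Fin 12 ⊕ Fin 4), (Sum.inl 9 : Fin 12 ⊕ Fin 4), (Sum.inl 3 : Fin 12 ⊕ Fin 4)}), ((Sum.inl 8 : Fin 12 ⊕ Fin 4), {(Sum.inr 1 : Fin 12 ⊕ Fin 4), (Sum.inl 6 : Fin 12 ⊕ Fin 4), (Sum.inl 5 : Fin 12 ⊕ Fin 4)})},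
    {((Sum.inr 3 : Fin 12 ⊕ Fin 4), {(Sum.inl 1 : Fin 12 ⊕ Fin 4), (Sum.inl 2 : Fin 12 ⊕ Fin 4), (Sum.inl 10 : Fin 12 ⊕ Fin 4)}), ((Sum.inl 6 : Fin 12 ⊕ Fin 4), {(Sum.inr 1 : Fin 12 ⊕ Fin 4), (Sum.inl 4 : Fin 12 ⊕ Fin 4), (Sum.inl 9 : Fin 12 ⊕ Fin 4)}), ((Sum.inl 7 : Fin 12 ⊕ Fin 4), {(Sum.inr 0 : Fin 12 ⊕ Fin 4), (Sum.inl 5 : Fin 12 ⊕ Fin 4), (Sum.inl 11 : Fin 12 ⊕ Fin 4)}), ((Sum.inl 8 : Fin 12 ⊕ Fin 4), {(Sum.inr 2 : Fin 12 ⊕ Fin 4), (Sum.inl 3 : Fin 12 ⊕ Fin 4), (Sum.inl 0 : Fin 12 ⊕ Fin 4)})},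
    {((Sum.inr 0 : Fin 12 ⊕ Fin 4), {(Sum.inl 4 : Fin 12 ⊕ Fin 4), (Sum.inl 5 : Fin 12 ⊕ Fin 4), (Sum.inl 6 : Fin 12 ⊕ Fin 4)}), ((Sum.inl 3 : Fin 12 ⊕ Fin 4), {(Sum.inr 1 : Fin 12 ⊕ Fin 4), (Sum.inl 11 : Fin 12 ⊕ Fin 4), (Sum.inl 0 : Fin 12 ⊕ Fin 4)}), ((Sum.inl 9 : Fin 12 ⊕ Fin 4), {(Sum.inr 3 : Fin 12 ⊕ Fin 4), (Sum.inl 7 : Fin 12 ⊕ Fin 4), (Sum.inl 2 : Fin 12 ⊕ Fin 4)}), ((Sum.inl 10 : Fin 12 ⊕ Fin 4), {(Sum.inr 2 : Fin 12 ⊕ Fin 4), (Sum.inl 1 : Fin 12 ⊕ Fin 4), (Sum.inl 8 : Fin 12 ⊕ Fin 4)})},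
    {((Sum.inr 1 : Fin 12 ⊕ Fin 4), {(Sum.inl 0 : Fin 12 ⊕ Fin 4), (Sum.inl 2 : Fin 12 ⊕ Fin 4), (Sum.inl 7 : Fin 12 ⊕ Fin 4)}), ((Sum.inl 4 : Fin 12 ⊕ Fin 4), {(Sum.inr 2 : Fin 12 ⊕ Fin 4), (Sum.inl 8 : Fin 12 ⊕ Fin 4), (Sum.inl 1 : Fin 12 ⊕ Fin 4)}), ((Sum.inl 5 : Fin 12 ⊕ Fin 4), {(Sum.inr 3 : Fin 12 ⊕ Fin 4), (Sum.inl 6 : Fin 12 ⊕ Fin 4), (Sum.inl 9 : Fin 12 ⊕ Fin 4)}), ((Sum.inl 10 : Fin 12 ⊕ Fin 4), {(Sum.inr 0 : Fin 12 ⊕ Fin 4), (Sum.inl 11 : Fin 12 ⊕ Fin 4), (Sum.inl 3 : Fin 12 ⊕ Fin 4)})},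
    {((Sum.inr 2 : Fin 12 ⊕ Fin 4), {(Sum.inl 3 : Fin 12 ⊕ Fin 4), (Sum.inl 5 : Fin 12 ⊕ Fin 4), (Sum.inl 7 : Fin 12 ⊕ Fin 4)}), ((Sum.inl 0 : Fin 12 ⊕ Fin 4), {(Sum.inr 0 : Fin 12 ⊕ Fin 4), (Sum.inl 10 : Fin 12 ⊕ Fin 4), (Sum.inl 4 : Fin 12 ⊕ Fin 4)}), ((Sum.inl 1 : Fin 12 ⊕ Fin 4), {(Sum.inr 1 : Fin 12 ⊕ Fin 4), (Sum.inl 8 : Fin 12 ⊕ Fin 4), (Sum.inl 6 : Fin 12 ⊕ Fin 4)}), ((Sum.inl 11 : Fin 12 ⊕ Fin 4), {(Sum.inr 3 : Fin 12 ⊕ Fin 4), (Sum.inl 9 : Fin 12 ⊕ Fin 4), (Sum.inl 2 : Fin 12 ⊕ Fin 4)})},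
    {((Sum.inr 3 : Fin 12 ⊕ Fin 4), {(Sum.inl 3 : Fin 12 ⊕ Fin 4), (Sum.inl 6 : Fin 12 ⊕ Fin 4), (Sum.inl 8 : Fin 12 ⊕ Fin 4)}), ((Sum.inl 1 : Fin 12 ⊕ Fin 4), {(Sum.inr 0 : Fin 12 ⊕ Fin 4), (Sum.inl 2 : Fin 12 ⊕ Fin 4), (Sum.inl 7 : Fin 12 ⊕ Fin 4)}), ((Sum.inl 9 : Fin 12 ⊕ Fin 4), {(Sum.inr 2 : Fin 12 ⊕ Fin 4), (Sum.inl 10 : Fin 12 ⊕ Fin 4), (Sum.inl 0 : Fin 12 ⊕ Fin 4)}), ((Sum.inl 11 : Fin 12 ⊕ Fin 4), {(Sum.inr 1 : Fin 12 ⊕ Fin 4), (Sum.inl 5 : Fin 12 ⊕ Fin 4), (Sum.inl 4 : Fin 12 ⊕ Fin 4)})}]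


set_option maxRecDepth 8000 in
set_option maxHeartbeats 4000000 in
/-- There exists a `(K₂, K_{1,3})`-IURD(16, 4; [3, 0], [0, 8]): here the total number of
points is 12 + 4 = 16 with a hole of size 4. -/
theorem IURD_16_4 : IsIURD 12 4 3 0 0 8 := by
  refine ⟨vM, Fin.elim0, Fin.elim0, vS, ?_, (fun j => j.elim0), (fun i => i.elim0), ?_, ?_⟩
  · -- matching classes
    intro i
    refine ⟨?_, ?_, ?_⟩
    · have H : ∀ (a b : W16), s(a, b) ∈ vM i → a ≠ b ∧ ¬(a.isRight ∧ b.isRight) := by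
        fin_cases i <;> decide
      intro e he
      induction e using Sym2.ind with
      | _ a b => exact mem_holey (H a b he).1 (H a b he).2
    · intro e he
      have H : ∀ x ∈ e, x ∈ Finset.univ.filter (fun x : W16 => x.isLeft) := by
        fin_cases i <;> fin_cases he <;> decide
      exact H
    · have key : ∀ x ∈ Finset.univ.filter (fun x : W16 => x.isLeft),
          ((vM i).filter (fun e => x ∈ e)).card = 1 := by
        fin_cases i <;> decide
      intro x hx
      exact exu (key x hx)
  · -- star classes
    intro j
    refine ⟨?_, ?_⟩
    · intro b hb
      have H : b.2.card = 3 ∧ b.1 ∉ b.2 ∧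
          ∀ l ∈ b.2, b.1 ≠ l ∧ ¬(b.1.isRight ∧ l.isRight) := by
        fin_cases j <;> fin_cases hb <;> decide
      refine ⟨H.1, H.2.1, ?_, fun x _ => Finset.mem_univ x⟩
      intro e he
      obtain ⟨l, hl, rfl⟩ := Finset.mem_image.mp he
      exact mem_holey (H.2.2 l hl).1 (H.2.2 l hl).2
    · have key : ∀ x : W16, ((vS j).filter (fun b => x ∈ starVerts b)).card = 1 := by
        fin_cases j <;> decide
      intro x _
      exact exu (key x)
  · -- edge coverage
    apply holey_elim
    decide
end
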